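/- There exists a symplectic immersion F : R² → R² whose image is contained in an arbitrarily small square (-ε, ε) × (-δ, δ) and which sends the origin to the origin. -/

import Mathlib

open Real

noncomputable def SImm.inn (l t : ℝ) : ℝ := 2*l*π + 2*l*Real.arctan t
noncomputable def SImm.r (l t : ℝ) : ℝ := Real.sqrt (SImm.inn l t)
noncomputable def SImm.th (l : ℝ) (p : ℝ × ℝ) : ℝ := p.2 * (1 + p.1^2) / l
noncomputable def SImm.F (l : ℝ) (p : ℝ × ℝ) : ℝ × ℝ :=
  (SImm.r l p.1 * Real.cos (SImm.th l p) - Real.sqrt (2*l*π),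
   SImm.r l p.1 * Real.sin (SImm.th l p))
noncomputable def SImm.mat (a b c d : ℝ) : ℝ × ℝ →L[ℝ] ℝ × ℝ :=
  (a • (ContinuousLinearMap.fst ℝ ℝ ℝ) + b • (ContinuousLinearMap.snd ℝ ℝ ℝ)).prod
  (c • (ContinuousLinearMap.fst ℝ ℝ ℝ) + d • (ContinuousLinearMap.snd ℝ ℝ ℝ))

namespace SImm

lemma inn_pos {l : ℝ} (hl : 0 < l) (t : ℝ) : l * π < inn l t := by
  have h1 : -(π/2) < Real.arctan t := Real.neg_pi_div_two_lt_arctan t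
  have : 0 < l * π := by positivity
  unfold inn; nlinarith
lemma inn_pos' {l : ℝ} (hl : 0 < l) (t : ℝ) : 0 < inn l t := by
  have h := inn_pos hl t
  have h2 : 0 < l * π := by positivity
  linarith
lemma inn_lt {l : ℝ} (hl : 0 < l) (t : ℝ) : inn l t < 3 * (l * π) := by
  have h1 : Real.arctan t < π/2 := Real.arctan_lt_pi_div_two t
  unfold inn; nlinarith
lemma r_pos {l : ℝ} (hl : 0 < l) (t : ℝ) : 0 < r l t :=
  Real.sqrt_pos.mpr (inn_pos' hl t)
lemma r_lt {l : ℝ} (hl : 0 < l) (t : ℝ) : r l t < Real.sqrt (3 * (l * π)) :=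
  Real.sqrt_lt_sqrt (le_of_lt (inn_pos' hl t)) (inn_lt hl t)

lemma hasDerivAt_r {l : ℝ} (hl : 0 < l) (t : ℝ) :
    HasDerivAt (r l) (l / ((1 + t^2) * r l t)) t := by
  have h1 : HasDerivAt (fun t => inn l t) (2*l * (1/(1+t^2))) t := by
    simpa [inn] using ((Real.hasDerivAt_arctan t).const_mul (2*l)).const_add (2*l*π)
  have hne : inn l t ≠ 0 := ne_of_gt (inn_pos' hl t)
  have h2 := h1.sqrt hne
  have hrw : r l = fun t => Real.sqrt (inn l t) := rfl
  rw [hrw]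
  convert h2 using 1
  have hr : 0 < Real.sqrt (inn l t) := r_pos hl t
  have h1t : (0:ℝ) < 1 + t^2 := by positivity
  simp only [r]
  field_simp

lemma mat_apply (a b c d : ℝ) (u : ℝ × ℝ) :
    mat a b c d u = (a * u.1 + b * u.2, c * u.1 + d * u.2) := by
  simp [mat, smul_eq_mul]

lemma hasFDerivAt_th {l : ℝ} (hl : 0 < l) (p : ℝ × ℝ) :
    HasFDerivAt (th l)
      ((2*p.1*p.2/l) • (ContinuousLinearMap.fst ℝ ℝ ℝ)
        + ((1+p.1^2)/l) • (ContinuousLinearMap.snd ℝ ℝ ℝ)) p := by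
  have h1 : HasFDerivAt (fun p : ℝ × ℝ => 1 + p.1^2)
      ((2*p.1) • (ContinuousLinearMap.fst ℝ ℝ ℝ)) p := by
    have := ((hasFDerivAt_fst (𝕜 := ℝ) (p := p)).mul (hasFDerivAt_fst (p := p))).const_add 1
    have e : (fun p : ℝ × ℝ => 1 + p.1^2) = fun x => 1 + (Prod.fst * Prod.fst : ℝ × ℝ → ℝ) x := by
      funext q; simp [sq]
    rw [e]
    refine this.congr_fderiv ?_
    ext u
    all_goals simp [smul_eq_mul]
    all_goals ring
  have h2 := (hasFDerivAt_snd (𝕜 := ℝ) (p := p)).mul h1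
  have h3 := h2.mul_const l⁻¹
  have hrw : th l = fun p : ℝ × ℝ => p.2 * (1 + p.1^2) * l⁻¹ := by
    funext q; simp [th, div_eq_mul_inv]
  rw [hrw]
  refine h3.congr_fderiv ?_
  ext u
  all_goals simp [smul_eq_mul]
  all_goals ring
end SImm

namespace SImm
lemma hasFDerivAt_F {l : ℝ} (hl : 0 < l) (p : ℝ × ℝ) :
    HasFDerivAt (F l)
      (mat (l/((1+p.1^2) * r l p.1) * Real.cos (th l p)
              - r l p.1 * Real.sin (th l p) * (2*p.1*p.2/l))
           (-(r l p.1 * Real.sin (th l p)) * ((1+p.1^2)/l))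
           (l/((1+p.1^2) * r l p.1) * Real.sin (th l p)
              + r l p.1 * Real.cos (th l p) * (2*p.1*p.2/l))
           (r l p.1 * Real.cos (th l p) * ((1+p.1^2)/l))) p := by
  have hr' : HasFDerivAt (fun q : ℝ × ℝ => r l q.1)
      ((l/((1+p.1^2) * r l p.1)) • (ContinuousLinearMap.fst ℝ ℝ ℝ)) p :=
    (hasDerivAt_r hl p.1).comp_hasFDerivAt p hasFDerivAt_fst
  have hth := hasFDerivAt_th hl p
  have hcos : HasFDerivAt (fun q : ℝ × ℝ => Real.cos (th l q))
      ((-Real.sin (th l p)) • ((2*p.1*p.2/l) • (ContinuousLinearMap.fst ℝ ℝ ℝ)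
        + ((1+p.1^2)/l) • (ContinuousLinearMap.snd ℝ ℝ ℝ))) p :=
    (Real.hasDerivAt_cos (th l p)).comp_hasFDerivAt p hth
  have hsin : HasFDerivAt (fun q : ℝ × ℝ => Real.sin (th l q))
      ((Real.cos (th l p)) • ((2*p.1*p.2/l) • (ContinuousLinearMap.fst ℝ ℝ ℝ)
        + ((1+p.1^2)/l) • (ContinuousLinearMap.snd ℝ ℝ ℝ))) p :=
    (Real.hasDerivAt_sin (th l p)).comp_hasFDerivAt p hth
  have hF1 := (hr'.mul hcos).sub_const (Real.sqrt (2*l*π))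
  have hF2 := hr'.mul hsin
  have hF := hF1.prodMk hF2
  refine hF.congr_fderiv ?_
  ext u
  all_goals simp [mat, smul_eq_mul, F]
  all_goals ring
end SImm

namespace SImm
lemma det_eq_one {l : ℝ} (hl : 0 < l) (p : ℝ × ℝ) :
    (l/((1+p.1^2) * r l p.1) * Real.cos (th l p)
        - r l p.1 * Real.sin (th l p) * (2*p.1*p.2/l))
      * (r l p.1 * Real.cos (th l p) * ((1+p.1^2)/l))
    - (-(r l p.1 * Real.sin (th l p)) * ((1+p.1^2)/l))
      * (l/((1+p.1^2) * r l p.1) * Real.sin (th l p)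
          + r l p.1 * Real.cos (th l p) * (2*p.1*p.2/l)) = 1 := by
  have hR : r l p.1 ≠ 0 := ne_of_gt (r_pos hl p.1)
  have h1t : (1:ℝ) + p.1^2 ≠ 0 := by positivity
  have hl' : l ≠ 0 := ne_of_gt hl
  have hpyth := Real.sin_sq_add_cos_sq (th l p)
  field_simp
  linear_combination (l^2) * hpyth

lemma contDiff_F {l : ℝ} (hl : 0 < l) : ContDiff ℝ (⊤ : ℕ∞) (F l) := by
  have hinn : ContDiff ℝ (⊤ : ℕ∞) (fun p : ℝ × ℝ => inn l p.1) := by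
    unfold inn
    exact contDiff_const.add (contDiff_const.mul (Real.contDiff_arctan.comp contDiff_fst))
  have hth : ContDiff ℝ (⊤ : ℕ∞) (th l) := by
    unfold th
    exact ((contDiff_snd.mul (contDiff_const.add (contDiff_fst.pow 2)))).div_const l
  rw [contDiff_iff_contDiffAt]
  intro p
  have hR : ContDiffAt ℝ (⊤ : ℕ∞) (fun q : ℝ × ℝ => r l q.1) p := by
    have hs : ContDiffAt ℝ (⊤ : ℕ∞) Real.sqrt (inn l p.1) :=
      Real.contDiffAt_sqrt (ne_of_gt (inn_pos' hl p.1))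
    exact hs.comp p hinn.contDiffAt
  exact ((hR.mul ((Real.contDiff_cos.comp hth).contDiffAt)).sub contDiffAt_const).prodMk
    (hR.mul ((Real.contDiff_sin.comp hth).contDiffAt))

lemma F_zero {l : ℝ} (hl : 0 < l) : F l 0 = 0 := by
  simp [F, th, r, inn]
end SImm


namespace SImm
lemma symp {l : ℝ} (hl : 0 < l) (p u v : ℝ × ℝ) :
    (fderiv ℝ (F l) p u).1 * (fderiv ℝ (F l) p v).2
      - (fderiv ℝ (F l) p v).1 * (fderiv ℝ (F l) p u).2 = u.1 * v.2 - v.1 * u.2 := by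
  rw [(hasFDerivAt_F hl p).fderiv]
  simp only [mat_apply]
  linear_combination (u.1 * v.2 - v.1 * u.2) * det_eq_one hl p

lemma range_F {l m : ℝ} (hl : 0 < l) (hbound : Real.sqrt (3*(l*π)) ≤ m/2) (p : ℝ × ℝ) :
    |(F l p).1| < m ∧ |(F l p).2| < m := by
  have hR : r l p.1 < m/2 := lt_of_lt_of_le (r_lt hl p.1) hbound
  have hRpos : 0 < r l p.1 := r_pos hl p.1
  have hs2 : Real.sqrt (2*l*π) ≤ m/2 := by
    refine le_trans (Real.sqrt_le_sqrt ?_) hbound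
    have : 0 < l * π := by have := Real.pi_pos; positivity
    nlinarith
  have hc1 : Real.cos (th l p) ≤ 1 := Real.cos_le_one _
  have hc2 : -1 ≤ Real.cos (th l p) := Real.neg_one_le_cos _
  have hsin1 : Real.sin (th l p) ≤ 1 := Real.sin_le_one _
  have hsin2 : -1 ≤ Real.sin (th l p) := Real.neg_one_le_sin _
  have hs0 : 0 ≤ Real.sqrt (2*l*π) := Real.sqrt_nonneg _
  constructor
  · rw [abs_lt]; simp only [F]
    constructor <;> nlinarith
  · rw [abs_lt]; simp only [F]
    constructor <;> nlinarith
end SImm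

/-- There exists a symplectic (area-preserving) immersion `F : ℝ² → ℝ²` whose image is
contained in an arbitrarily small rectangle `(-ε, ε) × (-δ, δ)` and which sends the origin
to the origin. -/
theorem exists_symplectic_immersion_into_small_square :
    ∀ ε > (0 : ℝ), ∀ δ > (0 : ℝ), ∃ F : ℝ × ℝ → ℝ × ℝ,
      ContDiff ℝ (⊤ : ℕ∞) F ∧ F 0 = 0 ∧
      Set.range F ⊆ Set.Ioo (-ε) ε ×ˢ Set.Ioo (-δ) δ ∧
      ∀ (p : ℝ × ℝ) (u v : ℝ × ℝ),
        (fderiv ℝ F p u).1 * (fderiv ℝ F p v).2 - (fderiv ℝ F p v).1 * (fderiv ℝ F p u).2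
          = u.1 * v.2 - v.1 * u.2 := by
  intro ε hε δ hδ
  have hπ : (0:ℝ) < π := Real.pi_pos
  have hm : 0 < min ε δ := lt_min hε hδ
  have hl : 0 < (min ε δ)^2 / (16*π) := by positivity
  have hbound : Real.sqrt (3*((min ε δ)^2 / (16*π)*π)) ≤ min ε δ / 2 := by
    have h1 : 3*((min ε δ)^2 / (16*π)*π) ≤ (min ε δ/2)^2 := by
      have h2 : (min ε δ)^2 / (16*π)*π = (min ε δ)^2/16 := by field_simp
      rw [h2]; nlinarith
    calc Real.sqrt (3*((min ε δ)^2 / (16*π)*π)) ≤ Real.sqrt ((min ε δ/2)^2) :=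
          Real.sqrt_le_sqrt h1
    _ = min ε δ/2 := Real.sqrt_sq (by positivity)
  refine ⟨SImm.F ((min ε δ)^2 / (16*π)), SImm.contDiff_F hl, SImm.F_zero hl, ?_,
    fun p u v => SImm.symp hl p u v⟩
  rintro q ⟨p, rfl⟩
  obtain ⟨h1, h2⟩ := SImm.range_F hl hbound p
  have e1 : |(SImm.F ((min ε δ)^2 / (16*π)) p).1| < ε := lt_of_lt_of_le h1 (min_le_left _ _)
  have e2 : |(SImm.F ((min ε δ)^2 / (16*π)) p).2| < δ := lt_of_lt_of_le h2 (min_le_right _ _)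
  rw [abs_lt] at e1 e2
  exact ⟨⟨e1.1, e1.2⟩, ⟨e2.1, e2.2⟩⟩
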